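/- For every integer i ≥ 1, the graph V_8^i + 13 + 16 + 36, obtained from V_8 by adding edges 13, 16, 36 and adding i new vertices each adjacent precisely to {1, 3, 6}, is W_6-minor-free. -/
import Mathlib

open SimpleGraph

/-- `H` is a minor of `G`: disjoint connected branch sets in `G`, one per vertex of `H`,
with an edge of `G` between branch sets of adjacent vertices of `H`. -/
def SimpleGraph.IsMinorOf {V W : Type*} (H : SimpleGraph W) (G : SimpleGraph V) : Prop :=
  ∃ B : W → Set V,
    (∀ w, (G.induce (B w)).Connected) ∧
    (Pairwise fun w₁ w₂ => Disjoint (B w₁) (B w₂)) ∧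
    (∀ w₁ w₂, H.Adj w₁ w₂ → ∃ x ∈ B w₁, ∃ y ∈ B w₂, G.Adj x y)

/-- The wheel `W₆`: hub `0` joined to the 6-cycle `1-2-3-4-5-6-1`. -/
def W6 : SimpleGraph (Fin 7) := SimpleGraph.fromEdgeSet
  {s(0,1), s(0,2), s(0,3), s(0,4), s(0,5), s(0,6),
   s(1,2), s(2,3), s(3,4), s(4,5), s(5,6), s(6,1)}

/-- `V₈`: the 8-cycle (vertices `0,…,7` standing for `1,…,8`) plus the four diagonals. -/
def V8 : SimpleGraph (Fin 8) := SimpleGraph.fromEdgeSet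
  {s(0,1), s(1,2), s(2,3), s(3,4), s(4,5), s(5,6), s(6,7), s(7,0),
   s(0,4), s(1,5), s(2,6), s(3,7)}

/-- `V₈ + 13 + 16 + 36` (labels `1,…,8` as `0,…,7`). -/
def V8p : SimpleGraph (Fin 8) := V8 ⊔ SimpleGraph.fromEdgeSet {s(0,2), s(0,5), s(2,5)}

/-- `V₈ⁱ + 13 + 16 + 36`: `V8p` together with `i` new cubic vertices, each adjacent
precisely to the vertices `1, 3, 6` (here `0, 2, 5`). -/
def V8iPlus (i : ℕ) : SimpleGraph (Fin 8 ⊕ Fin i) :=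
  SimpleGraph.fromRel (fun p q =>
    match p, q with
    | Sum.inl a, Sum.inl b => V8p.Adj a b
    | Sum.inr _, Sum.inl b => b = 0 ∨ b = 2 ∨ b = 5
    | _, _ => False)

instance : DecidableRel V8p.Adj := fun a b =>
  decidable_of_iff' _ (by
    simp only [V8p, V8, sup_adj, fromEdgeSet_adj, Set.mem_insert_iff, Set.mem_singleton_iff,
      Sym2.eq, Sym2.rel_iff', Prod.ext_iff, Prod.swap_prod_mk]
    exact Iff.rfl)

instance : DecidableRel W6.Adj := fun a b =>
  decidable_of_iff' _ (by
    simp only [W6, fromEdgeSet_adj, Set.mem_insert_iff, Set.mem_singleton_iff,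
      Sym2.eq, Sym2.rel_iff', Prod.ext_iff, Prod.swap_prod_mk]
    exact Iff.rfl)

/-! ### generic helpers -/

lemma reach_map {α β : Type*} {G : SimpleGraph α} {H : SimpleGraph β} (f : α → β)
    (hf : ∀ a b, G.Adj a b → H.Adj (f a) (f b) ∨ f a = f b) :
    ∀ {x y}, G.Reachable x y → H.Reachable (f x) (f y) := by
  intro x y h
  obtain ⟨w⟩ := h
  induction w with
  | nil => exact Reachable.refl _
  | cons h' p ih =>
    rcases hf _ _ h' with h'' | h''
    · exact (h''.reachable).trans ih
    · rw [h'']; exact ih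

lemma exists_adj_of_mem {α : Type*} {G : SimpleGraph α} {S : Set α}
    (h : (G.induce S).Connected) {a b : α} (ha : a ∈ S) (hb : b ∈ S) (hab : a ≠ b) :
    ∃ c ∈ S, G.Adj a c := by
  obtain ⟨w⟩ := h.preconnected ⟨a, ha⟩ ⟨b, hb⟩
  have hnil : ¬ w.Nil := Walk.not_nil_of_ne (by simpa using hab)
  have := w.adj_snd hnil
  exact ⟨(w.getVert 1).1, (w.getVert 1).2, this⟩

lemma eq_of_no_nbr {α : Type*} {G : SimpleGraph α} {S : Set α}
    (h : (G.induce S).Connected) {a : α} (ha : a ∈ S)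
    (hno : ∀ c ∈ S, ¬ G.Adj a c) : ∀ b ∈ S, b = a := by
  intro b hb
  by_contra hne
  obtain ⟨c, hc, hadj⟩ := exists_adj_of_mem h ha hb (fun e => hne e.symm)
  exact hno c hc hadj

/-! ### decidable facts about `V8p` and `Fin 6` -/

lemma tri : ∀ a c : Fin 8, (a = 0 ∨ a = 2 ∨ a = 5) → (c = 0 ∨ c = 2 ∨ c = 5) → a ≠ c →
    V8p.Adj a c := by decide

lemma degV8p : ∀ h : Fin 8, (V8p.neighborFinset h).card ≤ 5 := by decide

lemma stageA : ∀ a b : Fin 8, V8p.Adj a b →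
    (∀ x : Fin 8, x ≠ a → x ≠ b → (V8p.Adj x a ∨ V8p.Adj x b)) →
    ((a = 0 ∧ b = 2) ∨ (a = 2 ∧ b = 0) ∨ (a = 0 ∧ b = 5) ∨ (a = 5 ∧ b = 0) ∨
     (a = 2 ∧ b = 5) ∨ (a = 5 ∧ b = 2) ∨ (a = 0 ∧ b = 7) ∨ (a = 7 ∧ b = 0) ∨
     (a = 2 ∧ b = 3) ∨ (a = 3 ∧ b = 2)) := by decide

lemma fin6a : ∀ k : Fin 6, k - 1 ≠ k + 1 := by decide
lemma fin6b : ∀ k j : Fin 6, ((k-1 = j-1 ∧ k+1 = j+1) ∨ (k-1 = j+1 ∧ k+1 = j-1)) → k = j := by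
  decide
lemma fin6c : ∀ k : Fin 6, k - 1 + 1 = k := by decide

lemma hubAdj : ∀ k : Fin 6, W6.Adj 0 k.succ := by decide
lemma rimAdj : ∀ k : Fin 6, W6.Adj k.succ (k+1).succ := by decide

/-! ### the two "cycle killers" -/

lemma kill_single {a b : Fin 8} (c t : Fin 8)
    (hnb : ∀ x, V8p.Adj c x → x = a ∨ x = b ∨ x = t)
    (g : Fin 6 → Fin 8) (hinj : Function.Injective g)
    (hcyc : ∀ k, V8p.Adj (g k) (g (k+1)))
    (hne : ∀ k, g k ≠ a ∧ g k ≠ b)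
    (hc : ∃ k, g k = c) : False := by
  obtain ⟨k, hk⟩ := hc
  have h1 : g (k+1) = t := by
    rcases hnb _ (hk ▸ hcyc k) with h | h | h
    · exact absurd h (hne (k+1)).1
    · exact absurd h (hne (k+1)).2
    · exact h
  have hadj2 : V8p.Adj c (g (k-1)) := by
    have := hcyc (k-1)
    rw [fin6c k] at this
    rw [hk] at this
    exact this.symm
  have h2 : g (k-1) = t := by
    rcases hnb _ hadj2 with h | h | h
    · exact absurd h (hne (k-1)).1
    · exact absurd h (hne (k-1)).2
    · exact h
  exact fin6a k (hinj (h2.trans h1.symm))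

lemma kill_double {a b : Fin 8} (c1 c2 t1 t2 : Fin 8) (hc12 : c1 ≠ c2)
    (hnb1 : ∀ x, V8p.Adj c1 x → x = a ∨ x = b ∨ x = t1 ∨ x = t2)
    (hnb2 : ∀ x, V8p.Adj c2 x → x = a ∨ x = b ∨ x = t1 ∨ x = t2)
    (g : Fin 6 → Fin 8) (hinj : Function.Injective g)
    (hcyc : ∀ k, V8p.Adj (g k) (g (k+1)))
    (hne : ∀ k, g k ≠ a ∧ g k ≠ b)
    (hc1 : ∃ k, g k = c1) (hc2 : ∃ k, g k = c2) : False := by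
  obtain ⟨k1, hk1⟩ := hc1
  obtain ⟨k2, hk2⟩ := hc2
  have hk12 : k1 ≠ k2 := by rintro rfl; exact hc12 (hk1 ▸ hk2 ▸ rfl)
  have pair : ∀ k : Fin 6, g k = c1 ∨ g k = c2 →
      (g (k-1) = t1 ∧ g (k+1) = t2) ∨ (g (k-1) = t2 ∧ g (k+1) = t1) := by
    intro k hk
    have hnb : ∀ x, V8p.Adj (g k) x → x = a ∨ x = b ∨ x = t1 ∨ x = t2 := by
      rcases hk with h | h
      · rw [h]; exact hnb1
      · rw [h]; exact hnb2
    have hp : g (k+1) = t1 ∨ g (k+1) = t2 := by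
      rcases hnb _ (hcyc k) with h | h | h | h
      · exact absurd h (hne (k+1)).1
      · exact absurd h (hne (k+1)).2
      · exact Or.inl h
      · exact Or.inr h
    have hadjm : V8p.Adj (g k) (g (k-1)) := by
      have := hcyc (k-1); rw [fin6c k] at this; exact this.symm
    have hm : g (k-1) = t1 ∨ g (k-1) = t2 := by
      rcases hnb _ hadjm with h | h | h | h
      · exact absurd h (hne (k-1)).1
      · exact absurd h (hne (k-1)).2
      · exact Or.inl h
      · exact Or.inr h
    have hmp : g (k-1) ≠ g (k+1) := fun e => fin6a k (hinj e)
    rcases hm with h | h <;> rcases hp with h' | h'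
    · exact absurd (h.trans h'.symm) hmp
    · exact Or.inl ⟨h, h'⟩
    · exact Or.inr ⟨h, h'⟩
    · exact absurd (h.trans h'.symm) hmp
  have p1 := pair k1 (Or.inl hk1)
  have p2 := pair k2 (Or.inr hk2)
  apply hk12
  apply fin6b
  rcases p1 with ⟨h1, h2⟩ | ⟨h1, h2⟩ <;> rcases p2 with ⟨h3, h4⟩ | ⟨h3, h4⟩
  · exact Or.inl ⟨hinj (h1.trans h3.symm), hinj (h2.trans h4.symm)⟩
  · exact Or.inr ⟨hinj (h1.trans h4.symm), hinj (h2.trans h3.symm)⟩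
  · exact Or.inr ⟨hinj (h1.trans h4.symm), hinj (h2.trans h3.symm)⟩
  · exact Or.inl ⟨hinj (h1.trans h3.symm), hinj (h2.trans h4.symm)⟩

/-! ### Phase 3 : no model inside `V8p` itself -/

lemma noPure (C : Fin 7 → Set (Fin 8))
    (hconn : ∀ w, (C w).Nonempty → (V8p.induce (C w)).Connected)
    (hdisj : Pairwise fun u v => Disjoint (C u) (C v))
    (hne : ∀ w, (C w).Nonempty)
    (hEP : ∀ u v, W6.Adj u v → ∃ a ∈ C u, ∃ b ∈ C v, V8p.Adj a b) : False := by
  classical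
  set D : Fin 7 → Finset (Fin 8) := fun w => (Set.toFinite (C w)).toFinset with hD
  have hmemD : ∀ w x, x ∈ D w ↔ x ∈ C w := fun w x => Set.Finite.mem_toFinset _
  have hdisjD : ∀ u v : Fin 7, u ≠ v → Disjoint (D u) (D v) := by
    intro u v huv
    rw [Finset.disjoint_left]
    intro x hx hx'
    exact Set.disjoint_left.1 (hdisj huv) ((hmemD u x).1 hx) ((hmemD v x).1 hx')
  have hcard1 : ∀ w, 1 ≤ (D w).card := by
    intro w
    obtain ⟨x, hx⟩ := hne w
    exact Finset.card_pos.2 ⟨x, (hmemD w x).2 hx⟩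
  have hsum : ∑ w, (D w).card ≤ 8 := by
    rw [← Finset.card_biUnion (fun u _ v _ h => hdisjD u v h)]
    calc (Finset.univ.biUnion D).card ≤ (Finset.univ : Finset (Fin 8)).card :=
          Finset.card_le_card (Finset.subset_univ _)
      _ = 8 := rfl
  have hsum' : (D 0).card + ∑ k : Fin 6, (D k.succ).card ≤ 8 := by
    rwa [Fin.sum_univ_succ] at hsum
  have hrim6 : 6 ≤ ∑ k : Fin 6, (D k.succ).card := by
    calc (6:ℕ) = ∑ _k : Fin 6, 1 := by simp
      _ ≤ _ := Finset.sum_le_sum (fun k _ => hcard1 k.succ)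
  have h10 := hcard1 0
  -- hub part has ≤ 2 vertices
  rcases (by omega : (D 0).card = 1 ∨ (D 0).card = 2) with h1 | h2
  · -- hub is a single vertex : degree too small
    obtain ⟨h0, hh0⟩ := Finset.card_eq_one.1 h1
    have hb : ∀ k : Fin 6, ∃ b, b ∈ D k.succ ∧ V8p.Adj h0 b := by
      intro k
      obtain ⟨x, hx, y, hy, hadj⟩ := hEP 0 k.succ (hubAdj k)
      have hx' : x = h0 := by
        have : x ∈ D 0 := (hmemD 0 x).2 hx
        rw [hh0] at this; simpa using this
      exact ⟨y, (hmemD _ y).2 hy, hx' ▸ hadj⟩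
    choose b hbmem hbadj using hb
    have hbinj : Function.Injective b := by
      intro k k' he
      by_contra hkk
      have hne' : k.succ ≠ k'.succ := fun e => hkk (Fin.succ_injective _ e)
      exact Finset.disjoint_left.1 (hdisjD _ _ hne') (hbmem k) (he ▸ hbmem k')
    have hsub : Finset.univ.image b ⊆ V8p.neighborFinset h0 := by
      intro x hx
      obtain ⟨k, _, rfl⟩ := Finset.mem_image.1 hx
      exact (V8p.mem_neighborFinset h0 (b k)).2 (hbadj k)
    have := Finset.card_le_card hsub
    rw [Finset.card_image_of_injective _ hbinj, Finset.card_univ] at this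
    have := degV8p h0
    simp [Fintype.card_fin] at *
    omega
  · -- hub has two vertices, all rim parts are singletons
    have hrim1 : ∀ k : Fin 6, (D k.succ).card = 1 := by
      intro k
      by_contra hk
      have h2k : 2 ≤ (D k.succ).card := by have := hcard1 k.succ; omega
      have hrest : 5 ≤ ∑ j ∈ Finset.univ.erase k, (D j.succ).card := by
        calc (5:ℕ) = (Finset.univ.erase k).card • 1 := by simp
          _ ≤ _ := Finset.card_nsmul_le_sum _ _ _ (fun j _ => hcard1 j.succ)
      have : (D k.succ).card + ∑ j ∈ Finset.univ.erase k, (D j.succ).card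
          = ∑ j : Fin 6, (D j.succ).card :=
        Finset.add_sum_erase Finset.univ (fun j => (D j.succ).card) (Finset.mem_univ k)
      omega
    have hsumeq : ∑ w, (D w).card = 8 := by
      rw [Fin.sum_univ_succ, h2]
      have : ∑ k : Fin 6, (D k.succ).card = 6 := by
        rw [Finset.sum_congr rfl (fun k _ => hrim1 k)]; simp
      omega
    have hcover : Finset.univ.biUnion D = Finset.univ := by
      apply Finset.eq_univ_of_card
      rw [Finset.card_biUnion (fun u _ v _ h => hdisjD u v h), hsumeq]
      simp
    obtain ⟨a, b, hab, hD0⟩ := Finset.card_eq_two.1 h2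
    have haC : a ∈ C 0 := (hmemD 0 a).1 (by rw [hD0]; simp)
    have hbC : b ∈ C 0 := (hmemD 0 b).1 (by rw [hD0]; simp)
    have hclass : ∀ x ∈ C 0, x = a ∨ x = b := by
      intro x hx
      have : x ∈ D 0 := (hmemD 0 x).2 hx
      rw [hD0] at this; simpa using this
    have hadjab : V8p.Adj a b := by
      obtain ⟨c, hc, hadj⟩ := exists_adj_of_mem (hconn 0 ⟨a, haC⟩) haC hbC hab
      rcases hclass c hc with rfl | rfl
      · exact absurd hadj (V8p.irrefl)
      · exact hadj
    choose g hg using fun k => Finset.card_eq_one.1 (hrim1 k)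
    have hgC : ∀ k, g k ∈ C k.succ := fun k => (hmemD _ _).1 (by rw [hg k]; simp)
    have hgclass : ∀ k, ∀ x ∈ C k.succ, x = g k := by
      intro k x hx
      have : x ∈ D k.succ := (hmemD _ _).2 hx
      rw [hg k] at this; simpa using this
    have hgD : ∀ k : Fin 6, g k ∈ D k.succ := by
      intro k; rw [hg k]; exact Finset.mem_singleton_self _
    have hgne : ∀ k : Fin 6, g k ≠ a ∧ g k ≠ b := by
      intro k
      constructor <;> intro he <;>
        refine Finset.disjoint_left.1 (hdisjD k.succ 0 (by simp [Fin.succ_ne_zero])) (hgD k) ?_ <;>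
        · rw [hD0, he]; simp
    have hinjg : Function.Injective g := by
      intro k k' he
      by_contra hkk
      have hne' : k.succ ≠ k'.succ := fun e => hkk (Fin.succ_injective _ e)
      have : g k ∈ D k'.succ := by rw [he]; exact hgD k'
      exact Finset.disjoint_left.1 (hdisjD _ _ hne') (hgD k) this
    have hcyc : ∀ k : Fin 6, V8p.Adj (g k) (g (k+1)) := by
      intro k
      obtain ⟨x, hx, y, hy, hadj⟩ := hEP k.succ (k+1).succ (rimAdj k)
      rwa [hgclass k x hx, hgclass (k+1) y hy] at hadj
    have hhub : ∀ k : Fin 6, V8p.Adj (g k) a ∨ V8p.Adj (g k) b := by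
      intro k
      obtain ⟨x, hx, y, hy, hadj⟩ := hEP 0 k.succ (hubAdj k)
      rw [hgclass k y hy] at hadj
      rcases hclass x hx with rfl | rfl
      · exact Or.inl hadj.symm
      · exact Or.inr hadj.symm
    have hcov : ∀ x : Fin 8, x ≠ a → x ≠ b → ∃ k, g k = x := by
      intro x hxa hxb
      have : x ∈ Finset.univ.biUnion D := by rw [hcover]; simp
      obtain ⟨w, _, hw⟩ := Finset.mem_biUnion.1 this
      induction w using Fin.cases with
      | zero =>
        rw [hD0] at hw
        rcases Finset.mem_insert.1 hw with h | h
        · exact absurd h hxa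
        · exact absurd (Finset.mem_singleton.1 h) hxb
      | succ k =>
        rw [hg k] at hw
        exact ⟨k, (Finset.mem_singleton.1 hw).symm⟩
    have hdom : ∀ x : Fin 8, x ≠ a → x ≠ b → (V8p.Adj x a ∨ V8p.Adj x b) := by
      intro x hxa hxb
      obtain ⟨k, rfl⟩ := hcov x hxa hxb
      exact hhub k
    rcases stageA a b hadjab hdom with ⟨rfl, rfl⟩ | ⟨rfl, rfl⟩ | ⟨rfl, rfl⟩ | ⟨rfl, rfl⟩ |
      ⟨rfl, rfl⟩ | ⟨rfl, rfl⟩ | ⟨rfl, rfl⟩ | ⟨rfl, rfl⟩ | ⟨rfl, rfl⟩ | ⟨rfl, rfl⟩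
    · exact kill_single 1 5 (by decide) g hinjg hcyc hgne (hcov 1 (by decide) (by decide))
    · exact kill_single 1 5 (by decide) g hinjg hcyc hgne (hcov 1 (by decide) (by decide))
    · exact kill_single 4 3 (by decide) g hinjg hcyc hgne (hcov 4 (by decide) (by decide))
    · exact kill_single 4 3 (by decide) g hinjg hcyc hgne (hcov 4 (by decide) (by decide))
    · exact kill_single 1 0 (by decide) g hinjg hcyc hgne (hcov 1 (by decide) (by decide))
    · exact kill_single 1 0 (by decide) g hinjg hcyc hgne (hcov 1 (by decide) (by decide))
    · exact kill_double 6 1 2 5 (by decide) (by decide) (by decide) g hinjg hcyc hgne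
        (hcov 6 (by decide) (by decide)) (hcov 1 (by decide) (by decide))
    · exact kill_double 6 1 2 5 (by decide) (by decide) (by decide) g hinjg hcyc hgne
        (hcov 6 (by decide) (by decide)) (hcov 1 (by decide) (by decide))
    · exact kill_double 1 4 0 5 (by decide) (by decide) (by decide) g hinjg hcyc hgne
        (hcov 1 (by decide) (by decide)) (hcov 4 (by decide) (by decide))
    · exact kill_double 1 4 0 5 (by decide) (by decide) (by decide) g hinjg hcyc hgne
        (hcov 1 (by decide) (by decide)) (hcov 4 (by decide) (by decide))

/-! ### Phase 4 : the case of one cubic branch set -/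

def q4 : Finset (Fin 8) := {3, 4, 6, 7}

def adjF (X Y : Finset (Fin 8)) : Prop := ∃ x ∈ X, ∃ y ∈ Y, V8p.Adj x y
instance : DecidableRel adjF := fun X Y => by unfold adjF; infer_instance

def reachH (a : Fin 8) (X U : Finset (Fin 8)) : Prop :=
  ∃ x ∈ X, ∃ h : Fin 8, V8p.Adj x h ∧ (h = a ∨ h = 1 ∨ (h ∈ q4 ∧ h ∉ U))
instance (a X U) : Decidable (reachH a X U) := by unfold reachH; infer_instance

def BAD : Prop :=
  ∃ a ∈ ({0, 2, 5} : Finset (Fin 8)), ∃ A ∈ q4.powerset, A.Nonempty ∧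
    ∃ B ∈ q4.powerset, B.Nonempty ∧ Disjoint A B ∧ adjF A B ∧
      ∃ C ∈ q4.powerset, C.Nonempty ∧ Disjoint A C ∧ Disjoint B C ∧ adjF B C ∧
        reachH a A (A ∪ B ∪ C) ∧ reachH a B (A ∪ B ∪ C) ∧ reachH a C (A ∪ B ∪ C)
instance : Decidable BAD := by unfold BAD; infer_instance

theorem notBAD : ¬ BAD := by decide

lemma nbr1 : ∀ x : Fin 8, V8p.Adj 1 x → (x = 0 ∨ x = 2 ∨ x = 5) := by decide

lemma memq4 : ∀ y : Fin 8, ¬(y = 0 ∨ y = 2 ∨ y = 5) → y ≠ 1 → y ∈ q4 := by decide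

lemma core' (C : Fin 7 → Set (Fin 8)) (w0 : Fin 7) (idx : Fin 6 → Fin 7)
    (hinj : Function.Injective idx) (hiw : ∀ j, idx j ≠ w0)
    (hdisj : Pairwise fun u v => Disjoint (C u) (C v))
    (hconn : ∀ w, (C w).Nonempty → (V8p.induce (C w)).Connected)
    (hne : ∀ w, w ≠ w0 → (C w).Nonempty)
    (hEPn : ∀ u v, W6.Adj u v → (C u).Nonempty → (C v).Nonempty →
      ∃ a ∈ C u, ∃ b ∈ C v, V8p.Adj a b)
    (hTn : ∀ v, W6.Adj w0 v → ∃ b ∈ C v, (b = 0 ∨ b = 2 ∨ b = 5))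
    (hW1 : W6.Adj w0 (idx 0)) (hW2 : W6.Adj w0 (idx 1)) (hW3 : W6.Adj w0 (idx 5))
    (hW4 : W6.Adj (idx 2) (idx 3)) (hW5 : W6.Adj (idx 3) (idx 4))
    (hWa : W6.Adj (idx 0) (idx 2)) (hWb : W6.Adj (idx 0) (idx 3))
    (hWc : W6.Adj (idx 0) (idx 4)) : False := by
  classical
  have hdisj' : ∀ j j' : Fin 6, j ≠ j' → Disjoint (C (idx j)) (C (idx j')) :=
    fun j j' h => hdisj (hinj.ne h)
  have hnej : ∀ j, (C (idx j)).Nonempty := fun j => hne _ (hiw j)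
  -- the three neighbours of w0 share out the triangle {0,2,5}
  obtain ⟨x0, hx0C, hx0T⟩ := hTn _ hW1
  obtain ⟨xl, hxlC, hxlT⟩ := hTn _ hW2
  obtain ⟨xr, hxrC, hxrT⟩ := hTn _ hW3
  have hd01 := Set.disjoint_left.1 (hdisj' 0 1 (by decide))
  have hd05 := Set.disjoint_left.1 (hdisj' 0 5 (by decide))
  have hd15 := Set.disjoint_left.1 (hdisj' 1 5 (by decide))
  have hx0l : x0 ≠ xl := fun e => hd01 hx0C (e ▸ hxlC)
  have hx0r : x0 ≠ xr := fun e => hd05 hx0C (e ▸ hxrC)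
  have hxlr : xl ≠ xr := fun e => hd15 hxlC (e ▸ hxrC)
  have hTmem : ∀ t : Fin 8, (t = 0 ∨ t = 2 ∨ t = 5) → (t = x0 ∨ t = xl ∨ t = xr) := by
    have hsub : ({x0, xl, xr} : Finset (Fin 8)) ⊆ {0, 2, 5} := by
      intro t ht
      simp only [Finset.mem_insert, Finset.mem_singleton] at ht ⊢
      rcases ht with rfl | rfl | rfl
      · exact hx0T
      · exact hxlT
      · exact hxrT
    have hcard : ({x0, xl, xr} : Finset (Fin 8)).card = 3 := by
      rw [Finset.card_insert_of_notMem (by simp [hx0l, hx0r]),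
        Finset.card_insert_of_notMem (by simp [hxlr]), Finset.card_singleton]
    have := Finset.eq_of_subset_of_card_le hsub (by rw [hcard]; decide)
    intro t ht
    have : t ∈ ({x0, xl, xr} : Finset (Fin 8)) := by
      rw [this]
      simp only [Finset.mem_insert, Finset.mem_singleton]
      exact ht
    simpa using this
  -- the hub part contains exactly one vertex of the triangle, namely x0
  have hhubT : ∀ y ∈ C (idx 0), (y = 0 ∨ y = 2 ∨ y = 5) → y = x0 := by
    intro y hy hyT
    rcases hTmem y hyT with rfl | rfl | rfl
    · rfl
    · exact absurd hy (fun h => hd01 h hxlC)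
    · exact absurd hy (fun h => hd05 h hxrC)
  -- the parts at distance ≥ 2 from w0 avoid the triangle
  have hQT : ∀ j : Fin 6, (j = 2 ∨ j = 3 ∨ j = 4) →
      ∀ y ∈ C (idx j), ¬(y = 0 ∨ y = 2 ∨ y = 5) := by
    intro j hj y hy hyT
    have hj0 : j ≠ 0 := by rcases hj with rfl | rfl | rfl <;> decide
    have hj1 : j ≠ 1 := by rcases hj with rfl | rfl | rfl <;> decide
    have hj5 : j ≠ 5 := by rcases hj with rfl | rfl | rfl <;> decide
    rcases hTmem y hyT with rfl | rfl | rfl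
    · exact Set.disjoint_left.1 (hdisj' j 0 hj0) hy hx0C
    · exact Set.disjoint_left.1 (hdisj' j 1 hj1) hy hxlC
    · exact Set.disjoint_left.1 (hdisj' j 5 hj5) hy hxrC
  -- edges between the three far parts and from the hub
  obtain ⟨a23, ha23, b23, hb23, hadj23⟩ := hEPn _ _ hW4 (hnej 2) (hnej 3)
  obtain ⟨a34, ha34, b34, hb34, hadj34⟩ := hEPn _ _ hW5 (hnej 3) (hnej 4)
  -- vertex 1 is in none of the three far parts
  have h1not : ∀ j : Fin 6, (j = 2 ∨ j = 3 ∨ j = 4) → (1 : Fin 8) ∉ C (idx j) := by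
    intro j hj h1
    have hsing : ∀ y ∈ C (idx j), y = 1 := by
      apply eq_of_no_nbr (hconn _ (hnej j)) h1
      intro c hc hadj
      exact hQT j hj c hc (nbr1 c hadj)
    rcases hj with rfl | rfl | rfl
    · rw [hsing a23 ha23] at hadj23
      exact hQT 3 (by decide) b23 hb23 (nbr1 _ hadj23)
    · rw [hsing b23 hb23] at hadj23
      exact hQT 2 (by decide) a23 ha23 (nbr1 _ hadj23.symm)
    · rw [hsing b34 hb34] at hadj34
      exact hQT 3 (by decide) a34 ha34 (nbr1 _ hadj34.symm)
  -- hence the three far parts live inside {3,4,6,7}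
  have hq4 : ∀ j : Fin 6, (j = 2 ∨ j = 3 ∨ j = 4) → ∀ y ∈ C (idx j), y ∈ q4 := by
    intro j hj y hy
    refine memq4 y (hQT j hj y hy) (fun e => h1not j hj (e ▸ hy))
  -- build the finite sets
  set A : Finset (Fin 8) := (Set.toFinite (C (idx 2))).toFinset with hA
  set B : Finset (Fin 8) := (Set.toFinite (C (idx 3))).toFinset with hB
  set Cf : Finset (Fin 8) := (Set.toFinite (C (idx 4))).toFinset with hCf
  have hmemA : ∀ x, x ∈ A ↔ x ∈ C (idx 2) := fun x => Set.Finite.mem_toFinset _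
  have hmemB : ∀ x, x ∈ B ↔ x ∈ C (idx 3) := fun x => Set.Finite.mem_toFinset _
  have hmemC : ∀ x, x ∈ Cf ↔ x ∈ C (idx 4) := fun x => Set.Finite.mem_toFinset _
  apply notBAD
  refine ⟨x0, by simpa using hx0T, A, Finset.mem_powerset.2 (fun y hy => hq4 2 (by decide) y ((hmemA y).1 hy)), ?_⟩
  have hdisjF : ∀ (X Y : Finset (Fin 8)) (j j' : Fin 6), j ≠ j' →
      (∀ x, x ∈ X ↔ x ∈ C (idx j)) → (∀ x, x ∈ Y ↔ x ∈ C (idx j')) → Disjoint X Y := by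
    intro X Y j j' hjj' hX hY
    rw [Finset.disjoint_left]
    intro x hx hx'
    exact Set.disjoint_left.1 (hdisj' j j' hjj') ((hX x).1 hx) ((hY x).1 hx')
  -- the reach property for the three far parts
  have hreach : ∀ (X : Finset (Fin 8)) (j : Fin 6), (j = 2 ∨ j = 3 ∨ j = 4) →
      (∀ x, x ∈ X ↔ x ∈ C (idx j)) → W6.Adj (idx 0) (idx j) →
      reachH x0 X (A ∪ B ∪ Cf) := by
    intro X j hj hX hW
    obtain ⟨u, hu, v, hv, hadj⟩ := hEPn _ _ hW (hnej 0) (hnej j)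
    refine ⟨v, (hX v).2 hv, u, hadj.symm, ?_⟩
    by_cases hu025 : u = 0 ∨ u = 2 ∨ u = 5
    · exact Or.inl (hhubT u hu hu025)
    by_cases hu1 : u = 1
    · exact Or.inr (Or.inl hu1)
    refine Or.inr (Or.inr ⟨memq4 u hu025 hu1, ?_⟩)
    intro humem
    have hj2 : (0 : Fin 6) ≠ 2 := by decide
    have hj3 : (0 : Fin 6) ≠ 3 := by decide
    have hj4 : (0 : Fin 6) ≠ 4 := by decide
    rcases Finset.mem_union.1 humem with h | h
    · rcases Finset.mem_union.1 h with h | h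
      · exact Set.disjoint_left.1 (hdisj' 0 2 hj2) hu ((hmemA u).1 h)
      · exact Set.disjoint_left.1 (hdisj' 0 3 hj3) hu ((hmemB u).1 h)
    · exact Set.disjoint_left.1 (hdisj' 0 4 hj4) hu ((hmemC u).1 h)
  refine ⟨⟨a23, (hmemA a23).2 ha23⟩, B,
    Finset.mem_powerset.2 (fun y hy => hq4 3 (by decide) y ((hmemB y).1 hy)),
    ⟨b23, (hmemB b23).2 hb23⟩,
    hdisjF A B 2 3 (by decide) hmemA hmemB,
    ⟨a23, (hmemA a23).2 ha23, b23, (hmemB b23).2 hb23, hadj23⟩, Cf,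
    Finset.mem_powerset.2 (fun y hy => hq4 4 (by decide) y ((hmemC y).1 hy)),
    ⟨b34, (hmemC b34).2 hb34⟩,
    hdisjF A Cf 2 4 (by decide) hmemA hmemC,
    hdisjF B Cf 3 4 (by decide) hmemB hmemC,
    ⟨a34, (hmemB a34).2 ha34, b34, (hmemC b34).2 hb34, hadj34⟩,
    hreach A 2 (by decide) hmemA hWa,
    hreach B 3 (by decide) hmemB hWb,
    hreach Cf 4 (by decide) hmemC hWc⟩

/-! ### the graph `V8iPlus` -/

lemma adj_ll {i : ℕ} {a b : Fin 8} :
    (V8iPlus i).Adj (Sum.inl a) (Sum.inl b) ↔ V8p.Adj a b := by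
  rw [V8iPlus, fromRel_adj]
  constructor
  · rintro ⟨h1, h2 | h2⟩
    · exact h2
    · exact h2.symm
  · intro h
    exact ⟨by simpa using h.ne, Or.inl h⟩

lemma adj_lr {i : ℕ} {b : Fin 8} {v : Fin i} :
    (V8iPlus i).Adj (Sum.inl b) (Sum.inr v) ↔ (b = 0 ∨ b = 2 ∨ b = 5) := by
  rw [V8iPlus, fromRel_adj]
  constructor
  · rintro ⟨h1, h2 | h2⟩
    · exact h2.elim
    · exact h2
  · intro h
    exact ⟨by simp, Or.inr h⟩

lemma adj_rl {i : ℕ} {b : Fin 8} {v : Fin i} :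
    (V8iPlus i).Adj (Sum.inr v) (Sum.inl b) ↔ (b = 0 ∨ b = 2 ∨ b = 5) := by
  rw [V8iPlus, fromRel_adj]
  constructor
  · rintro ⟨h1, h2 | h2⟩
    · exact h2
    · exact h2.elim
  · intro h
    exact ⟨by simp, Or.inl h⟩

lemma adj_rr {i : ℕ} {u v : Fin i} :
    ¬ (V8iPlus i).Adj (Sum.inr u) (Sum.inr v) := by
  rw [V8iPlus, fromRel_adj]
  rintro ⟨h1, h2 | h2⟩ <;> exact h2

/-! ### structure of a vertex `w0` whose part misses `Fin 8` -/

lemma common_nbrs : ∀ w1 w2 u1 u2 u3 : Fin 7, u1 ≠ u2 → u1 ≠ u3 → u2 ≠ u3 →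
    W6.Adj w1 u1 → W6.Adj w1 u2 → W6.Adj w1 u3 →
    W6.Adj w2 u1 → W6.Adj w2 u2 → W6.Adj w2 u3 → w1 = w2 := by decide

lemma W6deg3 : ∀ w : Fin 7, 3 ≤ (Finset.univ.filter (fun u => W6.Adj w u)).card := by decide

lemma W6deg0 : (Finset.univ.filter (fun u => W6.Adj (0 : Fin 7) u)).card = 6 := by decide

lemma empty_structure (C : Fin 7 → Set (Fin 8))
    (hdisj : Pairwise fun u v => Disjoint (C u) (C v)) (w : Fin 7)
    (hTn : ∀ v, W6.Adj w v → ∃ b ∈ C v, (b = 0 ∨ b = 2 ∨ b = 5)) :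
    w ≠ 0 ∧ ∃ u0 u2 u5 : Fin 7, u0 ≠ u2 ∧ u0 ≠ u5 ∧ u2 ≠ u5 ∧
      (W6.Adj w u0 ∧ (0:Fin 8) ∈ C u0) ∧ (W6.Adj w u2 ∧ (2:Fin 8) ∈ C u2) ∧
      (W6.Adj w u5 ∧ (5:Fin 8) ∈ C u5) := by
  classical
  set s : Finset (Fin 7) := Finset.univ.filter (fun u => W6.Adj w u) with hs
  have hch : ∀ u : {x // x ∈ s}, ∃ t : Fin 8, t ∈ C u.1 ∧ (t = 0 ∨ t = 2 ∨ t = 5) := by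
    rintro ⟨u, hu⟩
    obtain ⟨b, hb, hbT⟩ := hTn u (Finset.mem_filter.1 hu).2
    exact ⟨b, hb, hbT⟩
  choose f hf1 hf2 using hch
  have hinjf : Function.Injective f := by
    intro u u' he
    by_contra hne
    have hval : u.1 ≠ u'.1 := fun e => hne (Subtype.ext e)
    exact Set.disjoint_left.1 (hdisj hval) (hf1 u) (he ▸ hf1 u')
  set F : Finset (Fin 8) := Finset.univ.image f with hF
  have hcardF : F.card = s.card := by
    rw [hF, Finset.card_image_of_injective _ hinjf, Finset.card_univ, Fintype.card_coe]
  have hsubF : F ⊆ ({0, 2, 5} : Finset (Fin 8)) := by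
    intro t ht
    obtain ⟨u, _, rfl⟩ := Finset.mem_image.1 ht
    simpa using hf2 u
  have hle : s.card ≤ 3 := by
    rw [← hcardF]
    calc F.card ≤ ({0, 2, 5} : Finset (Fin 8)).card := Finset.card_le_card hsubF
      _ = 3 := by decide
  have hw0 : w ≠ 0 := by
    rintro rfl
    rw [hs] at hle
    rw [W6deg0] at hle
    omega
  have hcard3 : 3 ≤ F.card := by rw [hcardF, hs]; exact W6deg3 w
  have hFeq : F = ({0, 2, 5} : Finset (Fin 8)) :=
    Finset.eq_of_subset_of_card_le hsubF (by
      calc ({0, 2, 5} : Finset (Fin 8)).card = 3 := by decide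
        _ ≤ F.card := hcard3)
  have hget : ∀ t : Fin 8, t ∈ ({0, 2, 5} : Finset (Fin 8)) →
      ∃ u : {x // x ∈ s}, f u = t := by
    intro t ht
    rw [← hFeq] at ht
    obtain ⟨u, _, he⟩ := Finset.mem_image.1 ht
    exact ⟨u, he⟩
  obtain ⟨u0, hu0⟩ := hget 0 (by decide)
  obtain ⟨u2, hu2⟩ := hget 2 (by decide)
  obtain ⟨u5, hu5⟩ := hget 5 (by decide)
  have hadj : ∀ u : {x // x ∈ s}, W6.Adj w u.1 := fun u => (Finset.mem_filter.1 u.2).2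
  refine ⟨hw0, u0.1, u2.1, u5.1, ?_, ?_, ?_,
    ⟨hadj u0, hu0 ▸ hf1 u0⟩, ⟨hadj u2, hu2 ▸ hf1 u2⟩, ⟨hadj u5, hu5 ▸ hf1 u5⟩⟩
  · intro e
    have : u0 = u2 := Subtype.ext e
    rw [this, hu2] at hu0
    exact absurd hu0 (by decide)
  · intro e
    have : u0 = u5 := Subtype.ext e
    rw [this, hu5] at hu0
    exact absurd hu0 (by decide)
  · intro e
    have : u2 = u5 := Subtype.ext e
    rw [this, hu5] at hu2
    exact absurd hu2 (by decide)

/-! ### main theorem -/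

/-- For every `i ≥ 1`, the graph `V₈ⁱ + 13 + 16 + 36` is `W₆`-minor-free. -/
theorem stmt18 : ∀ i : ℕ, 1 ≤ i → ¬ W6.IsMinorOf (V8iPlus i) := by
  intro i _ hmin
  obtain ⟨B, hBconn, hBdisj, hBedge⟩ := hmin
  classical
  set C : Fin 7 → Set (Fin 8) := fun w => {a : Fin 8 | Sum.inl a ∈ B w} with hC
  have hCdisj : Pairwise fun u v => Disjoint (C u) (C v) := by
    intro u v huv
    rw [Set.disjoint_left]
    intro a ha ha'
    exact Set.disjoint_left.1 (hBdisj huv) ha ha'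
  have hBne : ∀ w, (B w).Nonempty := by
    intro w
    obtain ⟨⟨x, hx⟩⟩ := (hBconn w).nonempty
    exact ⟨x, hx⟩
  have hsingle : ∀ w, C w = ∅ → ∃ v : Fin i, B w = {Sum.inr v} := by
    intro w hw
    obtain ⟨x, hx⟩ := hBne w
    have hCw : ∀ a : Fin 8, Sum.inl a ∉ B w := by
      intro a ha
      have : a ∈ C w := ha
      rw [hw] at this
      exact this
    rcases x with a | v
    · exact absurd hx (hCw a)
    · refine ⟨v, ?_⟩
      ext y
      simp only [Set.mem_singleton_iff]
      constructor
      · intro hy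
        by_contra hne
        obtain ⟨c, hc, hadj⟩ := exists_adj_of_mem (hBconn w) hx hy (fun e => hne e.symm)
        rcases c with a | u
        · exact hCw a hc
        · exact adj_rr hadj
      · rintro rfl; exact hx
  have hpick : ∀ (w : Fin 7) (v : Fin i), Sum.inr v ∈ B w → (C w).Nonempty →
      ∃ c, c ∈ C w ∧ (c = 0 ∨ c = 2 ∨ c = 5) := by
    rintro w v hv ⟨a0, ha0⟩
    obtain ⟨z, hz, hadj⟩ := exists_adj_of_mem (hBconn w) hv ha0 (by simp)
    rcases z with c | u
    · exact ⟨c, hz, adj_rl.1 hadj⟩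
    · exact absurd hadj adj_rr
  have hCconn : ∀ w, (C w).Nonempty → (V8p.induce (C w)).Connected := by
    intro w hnew
    obtain ⟨a0, ha0⟩ := hnew
    have hpk : ∀ (v : Fin i), Sum.inr v ∈ B w → ∃ c, c ∈ C w ∧ (c = 0 ∨ c = 2 ∨ c = 5) :=
      fun v hv => hpick w v hv ⟨a0, ha0⟩
    choose pk hpk1 hpk2 using hpk
    let f : ↥(B w) → ↥(C w) := fun p =>
      match p with
      | ⟨Sum.inl a, h⟩ => ⟨a, h⟩
      | ⟨Sum.inr v, h⟩ => ⟨pk v h, hpk1 v h⟩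
    have hf : ∀ p q, ((V8iPlus i).induce (B w)).Adj p q →
        (V8p.induce (C w)).Adj (f p) (f q) ∨ f p = f q := by
      rintro ⟨x, hx⟩ ⟨y, hy⟩ hadj
      rcases x with a | v <;> rcases y with b | u
      · exact Or.inl (adj_ll.1 hadj)
      · have haT : a = 0 ∨ a = 2 ∨ a = 5 := adj_lr.1 hadj
        by_cases he : a = pk u hy
        · exact Or.inr (Subtype.ext he)
        · exact Or.inl (tri a (pk u hy) haT (hpk2 u hy) he)
      · have hbT : b = 0 ∨ b = 2 ∨ b = 5 := adj_rl.1 hadj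
        by_cases he : pk v hx = b
        · exact Or.inr (Subtype.ext he)
        · exact Or.inl (tri (pk v hx) b (hpk2 v hx) hbT he)
      · exact absurd hadj adj_rr
    haveI : Nonempty ↥(C w) := ⟨⟨a0, ha0⟩⟩
    refine Connected.mk ?_
    rintro ⟨x, hx⟩ ⟨y, hy⟩
    exact reach_map f hf ((hBconn w).preconnected ⟨Sum.inl x, hx⟩ ⟨Sum.inl y, hy⟩)
  have hEPn : ∀ u v, W6.Adj u v → (C u).Nonempty → (C v).Nonempty →
      ∃ a ∈ C u, ∃ b ∈ C v, V8p.Adj a b := by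
    intro u v huv hnu hnv
    obtain ⟨x, hx, y, hy, hadj⟩ := hBedge u v huv
    rcases x with a | vv <;> rcases y with b | uu
    · exact ⟨a, hx, b, hy, adj_ll.1 hadj⟩
    · have haT := adj_lr.1 hadj
      obtain ⟨c, hc, hcT⟩ := hpick v uu hy hnv
      have hnec : a ≠ c := fun e =>
        Set.disjoint_left.1 (hCdisj huv.ne) hx (e ▸ hc)
      exact ⟨a, hx, c, hc, tri a c haT hcT hnec⟩
    · have hbT := adj_rl.1 hadj
      obtain ⟨c, hc, hcT⟩ := hpick u vv hx hnu
      have hnec : c ≠ b := fun e =>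
        Set.disjoint_left.1 (hCdisj huv.ne) (e ▸ hc : (b : Fin 8) ∈ C u) hy
      exact ⟨c, hc, b, hy, tri c b hcT hbT hnec⟩
    · exact absurd hadj adj_rr
  have hTn : ∀ u v, W6.Adj u v → C u = ∅ → ∃ b ∈ C v, (b = 0 ∨ b = 2 ∨ b = 5) := by
    intro u v huv hu
    obtain ⟨x, hx, y, hy, hadj⟩ := hBedge u v huv
    obtain ⟨vv, hvv⟩ := hsingle u hu
    rw [hvv, Set.mem_singleton_iff] at hx
    subst hx
    rcases y with b | uu
    · exact ⟨b, hy, adj_rl.1 hadj⟩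
    · exact absurd hadj adj_rr
  by_cases hall : ∀ w, (C w).Nonempty
  · exact noPure C hCconn hCdisj hall (fun u v huv => hEPn u v huv (hall u) (hall v))
  · push_neg at hall
    obtain ⟨w0, hw0e⟩ := hall
    obtain ⟨hw00, u0, u2, u5, h02, h05, h25, ⟨ha0, hm0⟩, ⟨ha2, hm2⟩, ⟨ha5, hm5⟩⟩ :=
      empty_structure C hCdisj w0 (fun v hv => hTn w0 v hv hw0e)
    have hne : ∀ w, w ≠ w0 → (C w).Nonempty := by
      intro w hw
      by_contra hwe
      rw [Set.not_nonempty_iff_eq_empty] at hwe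
      obtain ⟨_, v0, v2, v5, g02, g05, g25, ⟨hb0, hn0⟩, ⟨hb2, hn2⟩, ⟨hb5, hn5⟩⟩ :=
        empty_structure C hCdisj w (fun v hv => hTn w v hv hwe)
      have e0 : v0 = u0 := by
        by_contra hne'
        exact Set.disjoint_left.1 (hCdisj hne') hn0 hm0
      have e2 : v2 = u2 := by
        by_contra hne'
        exact Set.disjoint_left.1 (hCdisj hne') hn2 hm2
      have e5 : v5 = u5 := by
        by_contra hne'
        exact Set.disjoint_left.1 (hCdisj hne') hn5 hm5
      exact hw (common_nbrs w w0 u0 u2 u5 h02 h05 h25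
        (e0 ▸ hb0) (e2 ▸ hb2) (e5 ▸ hb5) ha0 ha2 ha5)
    fin_cases w0
    · exact absurd rfl hw00
    · exact core' C _ ![0,2,3,4,5,6] (by decide) (by decide) hCdisj hCconn hne hEPn
        (fun v hv => hTn _ v hv hw0e) (by decide) (by decide) (by decide) (by decide)
        (by decide) (by decide) (by decide) (by decide)
    · exact core' C _ ![0,3,4,5,6,1] (by decide) (by decide) hCdisj hCconn hne hEPn
        (fun v hv => hTn _ v hv hw0e) (by decide) (by decide) (by decide) (by decide)
        (by decide) (by decide) (by decide) (by decide)
    · exact core' C _ ![0,4,5,6,1,2] (by decide) (by decide) hCdisj hCconn hne hEPn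
        (fun v hv => hTn _ v hv hw0e) (by decide) (by decide) (by decide) (by decide)
        (by decide) (by decide) (by decide) (by decide)
    · exact core' C _ ![0,5,6,1,2,3] (by decide) (by decide) hCdisj hCconn hne hEPn
        (fun v hv => hTn _ v hv hw0e) (by decide) (by decide) (by decide) (by decide)
        (by decide) (by decide) (by decide) (by decide)
    · exact core' C _ ![0,6,1,2,3,4] (by decide) (by decide) hCdisj hCconn hne hEPn
        (fun v hv => hTn _ v hv hw0e) (by decide) (by decide) (by decide) (by decide)
        (by decide) (by decide) (by decide) (by decide)
    · exact core' C _ ![0,1,2,3,4,5] (by decide) (by decide) hCdisj hCconn hne hEPn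
        (fun v hv => hTn _ v hv hw0e) (by decide) (by decide) (by decide) (by decide)
        (by decide) (by decide) (by decide) (by decide)
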